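/- arXiv:1807.09015 — 2 statements merged into one kernel-verified Lean document; each statement's English description precedes it below -/
import Mathlib

section
/- Let [[k]] be defined for a finitely supported integer sequence k by [[k]] = (‖k‖ + 1)/2 if k ≠ 0 and [[k]] = 3/2 if k = 0, where ‖k‖ = Σ_l |k_l|. Then for any m ≥ 2 finitely supported integer sequences k¹, …, k^m with sum k, one has [[k¹]] + ⋯ + [[k^m]] ≥ (m − 1)/2 + [[k]]. -/
/-- `‖k‖ = Σ_l |k_l|` for a finitely supported integer sequence. -/
def knorm (k : ℕ →₀ ℤ) : ℤ := k.sum fun _ v => |v|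

/-- `[[k]] = (‖k‖+1)/2` for `k ≠ 0`, and `[[0]] = 3/2`. -/
noncomputable def bracket (k : ℕ →₀ ℤ) : ℝ :=
  if k = 0 then 3/2 else ((knorm k : ℝ) + 1) / 2

lemma knorm_nonneg (k : ℕ →₀ ℤ) : 0 ≤ knorm k :=
  Finset.sum_nonneg fun _ _ => abs_nonneg _

lemma knorm_eq_sum (k : ℕ →₀ ℤ) (s : Finset ℕ) (hs : k.support ⊆ s) :
    knorm k = ∑ l ∈ s, |k l| :=
  Finsupp.sum_of_support_subset k hs _ (fun _ _ => abs_zero)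

lemma one_le_knorm {k : ℕ →₀ ℤ} (hk : k ≠ 0) : 1 ≤ knorm k := by
  obtain ⟨l, hl⟩ := Finsupp.support_nonempty_iff.mpr hk
  have h1 : 1 ≤ |k l| := by
    have := abs_pos.mpr (Finsupp.mem_support_iff.mp hl)
    omega
  calc (1 : ℤ) ≤ |k l| := h1
    _ ≤ knorm k :=
      Finset.single_le_sum (f := fun l => |k l|) (fun _ _ => abs_nonneg _) hl

lemma knorm_sum_le (m : ℕ) (K : Fin m → (ℕ →₀ ℤ)) :
    knorm (∑ i, K i) ≤ ∑ i, knorm (K i) := by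
  set S := (∑ i, K i).support ∪ Finset.univ.biUnion (fun i => (K i).support) with hS
  have h1 : knorm (∑ i, K i) = ∑ l ∈ S, |(∑ i, K i) l| :=
    knorm_eq_sum _ _ (Finset.subset_union_left)
  have h2 : ∀ i, knorm (K i) = ∑ l ∈ S, |(K i) l| := by
    intro i
    refine knorm_eq_sum _ _ (fun l hl => Finset.mem_union_right _ ?_)
    exact Finset.mem_biUnion.mpr ⟨i, Finset.mem_univ i, hl⟩
  rw [h1]
  simp only [h2]
  rw [Finset.sum_comm]
  refine Finset.sum_le_sum fun l _ => ?_
  rw [Finsupp.finset_sum_apply]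
  exact Finset.abs_sum_le_sum_abs _ _

lemma bracket_ge (k : ℕ →₀ ℤ) : ((knorm k : ℝ) + 1) / 2 ≤ bracket k := by
  by_cases h : k = 0
  · subst h
    have hb : bracket 0 = 3/2 := if_pos rfl
    have hk : knorm (0 : ℕ →₀ ℤ) = 0 := by simp [knorm]
    rw [hb, hk]; norm_num
  · have hb : bracket k = ((knorm k : ℝ) + 1) / 2 := if_neg h
    rw [hb]

lemma bracket_ge_one (k : ℕ →₀ ℤ) : 1 ≤ bracket k := by
  unfold bracket
  split
  · norm_num
  · next h =>
    have := one_le_knorm h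
    have : (1 : ℝ) ≤ (knorm k : ℝ) := by exact_mod_cast this
    linarith

/-- For `m ≥ 2` finitely supported integer sequences with sum `k`,
`[[k¹]] + ⋯ + [[k^m]] ≥ (m−1)/2 + [[k]]`. -/
theorem stmt5 (m : ℕ) (hm : 2 ≤ m) (K : Fin m → (ℕ →₀ ℤ)) :
    ((m : ℝ) - 1) / 2 + bracket (∑ i, K i) ≤ ∑ i, bracket (K i) := by
  have hm' : (2 : ℝ) ≤ (m : ℝ) := by exact_mod_cast hm
  by_cases h : (∑ i, K i) = 0
  · -- use bracket ≥ 1 for each summand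
    have hsum : (m : ℝ) ≤ ∑ i, bracket (K i) := by
      calc (m : ℝ) = ∑ _i : Fin m, (1 : ℝ) := by simp
        _ ≤ ∑ i, bracket (K i) := Finset.sum_le_sum fun i _ => bracket_ge_one (K i)
    rw [h]
    have hb : bracket (0 : ℕ →₀ ℤ) = 3/2 := if_pos rfl
    rw [hb]
    linarith
  · have hkn : (knorm (∑ i, K i) : ℝ) ≤ ∑ i, (knorm (K i) : ℝ) := by
      exact_mod_cast knorm_sum_le m K
    have hsum : ∑ i, ((knorm (K i) : ℝ) + 1) / 2 ≤ ∑ i, bracket (K i) :=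
      Finset.sum_le_sum fun i _ => bracket_ge (K i)
    have hexp : ∑ i, ((knorm (K i) : ℝ) + 1) / 2
        = ((∑ i, (knorm (K i) : ℝ)) + m) / 2 := by
      rw [← Finset.sum_div, Finset.sum_add_distrib]
      simp
    have hb : bracket (∑ i, K i) = ((knorm (∑ i, K i) : ℝ) + 1) / 2 := if_neg h
    rw [hexp] at hsum; rw [hb]
    linarith
end

section
/- Let K ≥ 1, s ≥ 1, ρ > 0, and ω_l = √(ρ + l²). Then there exists a constant C (depending on K, s, ρ) such that for all finitely supported integer sequences k with ‖k‖ ≤ K, Σ_{l≥0} |k_l| ω_l^{2s+1} ≤ C · ω^{2s|k|} (1 + |k·ω|), where ω^{2s|k|} = Π_l ω_l^{2s|k_l|} and k·ω = Σ_l k_l ω_l. -/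
/-!
Put `x = k·ω` and `N = Σ_l |k_l|`. First let all `ω_l ≥ 1`. For `l` in the support of `k`,
`|k_l| ≥ 1` gives `ω_l ≤ |x| + Σ_{j ≠ l} |k_j| ω_j`, and each `ω_j` with `j ≠ l` is at most the
product `Q_l = Π_{j ≠ l} ω_j^{t|k_j|}`, whose factors are all `≥ 1`. Hence
`ω_l^{t+1} ≤ ω_l^t (|x| + N Q_l) ≤ (N + 1) ω^{t|k|} (1 + |x|)`, and summing against `|k_l|`
costs a factor `N`. A lower bound `m ≤ ω_l` with `m ≤ 1` is reduced to this case by rescaling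
`ω` by `m`, which is where the factor `m^{-tN}` comes from; for `ω_l = √(ρ + l²)` take
`m = min 1 √ρ`.
-/

open Finset

theorem abs_le_abs_sum_add_sum_erase {ι G : Type*} [DecidableEq ι] [AddCommGroup G]
    [LinearOrder G] [IsOrderedAddMonoid G] {s : Finset ι} (f : ι → G) {i : ι} (hi : i ∈ s) :
    |f i| ≤ |∑ j ∈ s, f j| + ∑ j ∈ s.erase i, |f j| := by
  rw [← add_sum_erase s f hi]
  calc |f i| = |(f i + ∑ j ∈ s.erase i, f j) - ∑ j ∈ s.erase i, f j| := by rw [add_sub_cancel_right]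
    _ ≤ |f i + ∑ j ∈ s.erase i, f j| + |∑ j ∈ s.erase i, f j| := abs_sub _ _
    _ ≤ |f i + ∑ j ∈ s.erase i, f j| + ∑ j ∈ s.erase i, |f j| := by
      gcongr; exact abs_sum_le_sum_abs _ _

section

variable {α : Type*} {ω : α → ℝ} {t : ℝ} {k : α →₀ ℤ}

theorem one_le_abs_of_mem_support {l : α} (hl : l ∈ k.support) : (1 : ℝ) ≤ |(k l : ℝ)| := by
  exact_mod_cast Int.one_le_abs (Finsupp.mem_support_iff.1 hl)

theorem le_abs_sum_add_mul_prod_erase [DecidableEq α] (hω : ∀ l ∈ k.support, 1 ≤ ω l)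
    (ht : 1 ≤ t) {l : α} (hl : l ∈ k.support) :
    ω l ≤ |∑ j ∈ k.support, (k j : ℝ) * ω j|
      + (∑ j ∈ k.support, (|k j| : ℝ)) * ∏ j ∈ k.support.erase l, ω j ^ (t * (|k j| : ℝ)) := by
  set Q := ∏ j ∈ k.support.erase l, ω j ^ (t * (|k j| : ℝ))
  have abs_mul_ω : ∀ j ∈ k.support, |(k j : ℝ) * ω j| = |(k j : ℝ)| * ω j := fun j hj => by
    rw [abs_mul, abs_of_nonneg (zero_le_one.trans (hω j hj))]
  have one_le_rpow : ∀ j ∈ k.support, 1 ≤ ω j ^ (t * (|k j| : ℝ)) := fun j hj =>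
    Real.one_le_rpow (hω j hj) (by nlinarith [one_le_abs_of_mem_support hj])
  have hωQ : ∀ j ∈ k.support.erase l, ω j ≤ Q := fun j hj => by
    have hj' := mem_of_mem_erase hj
    calc ω j ≤ ω j ^ (t * (|k j| : ℝ)) :=
          Real.self_le_rpow_of_one_le (hω j hj')
            (one_le_mul_of_one_le_of_one_le ht (one_le_abs_of_mem_support hj'))
      _ = ∏ i ∈ {j}, ω i ^ (t * (|k i| : ℝ)) := (prod_singleton _ _).symm
      _ ≤ Q := prod_le_prod_of_subset_of_one_le (singleton_subset_iff.2 hj)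
          (fun i hi => by rw [mem_singleton.1 hi]; exact zero_le_one.trans (one_le_rpow j hj'))
          (fun i hi _ => one_le_rpow i (mem_of_mem_erase hi))
  calc ω l ≤ |(k l : ℝ) * ω l| := by
        rw [abs_mul_ω l hl]
        exact le_mul_of_one_le_left (zero_le_one.trans (hω l hl)) (one_le_abs_of_mem_support hl)
    _ ≤ |∑ j ∈ k.support, (k j : ℝ) * ω j| + ∑ j ∈ k.support.erase l, |(k j : ℝ) * ω j| :=
        abs_le_abs_sum_add_sum_erase (fun j => (k j : ℝ) * ω j) hl
    _ ≤ |∑ j ∈ k.support, (k j : ℝ) * ω j| + ∑ j ∈ k.support.erase l, (|k j| : ℝ) * Q := by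
        gcongr with j hj
        rw [abs_mul_ω j (mem_of_mem_erase hj)]
        exact mul_le_mul_of_nonneg_left (hωQ j hj) (abs_nonneg _)
    _ ≤ _ := by
        rw [← sum_mul]
        gcongr
        · exact prod_nonneg fun j hj => zero_le_one.trans (one_le_rpow j (mem_of_mem_erase hj))
        · exact erase_subset _ _

theorem rpow_add_one_le_of_one_le (hω : ∀ l ∈ k.support, 1 ≤ ω l) (ht : 1 ≤ t) {l : α}
    (hl : l ∈ k.support) :
    ω l ^ (t + 1) ≤ ((∑ j ∈ k.support, (|k j| : ℝ)) + 1)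
      * (∏ j ∈ k.support, ω j ^ (t * (|k j| : ℝ))) * (1 + |∑ j ∈ k.support, (k j : ℝ) * ω j|) := by
  classical
  set N := ∑ j ∈ k.support, (|k j| : ℝ)
  set x := ∑ j ∈ k.support, (k j : ℝ) * ω j
  set Q := ∏ j ∈ k.support.erase l, ω j ^ (t * (|k j| : ℝ))
  have hN : 0 ≤ N := sum_nonneg fun _ _ => abs_nonneg _
  have hQ : 1 ≤ Q := one_le_prod fun j hj =>
    Real.one_le_rpow (hω j (mem_of_mem_erase hj)) (by positivity)
  have hωl : 1 ≤ ω l := hω l hl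
  have h_rpow : ω l ^ t ≤ ω l ^ (t * (|k l| : ℝ)) :=
    Real.rpow_le_rpow_of_exponent_le hωl
      (le_mul_of_one_le_right (by linarith) (one_le_abs_of_mem_support hl))
  have h_base : ω l ≤ (N + 1) * Q * (1 + |x|) := by
    have : ω l ≤ |x| + N * Q := le_abs_sum_add_mul_prod_erase hω ht hl
    nlinarith [mul_nonneg (sub_nonneg.2 hQ) (abs_nonneg x),
      mul_nonneg (mul_nonneg hN (zero_le_one.trans hQ)) (abs_nonneg x)]
  calc ω l ^ (t + 1) = ω l ^ t * ω l := Real.rpow_add_one (by linarith) t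
    _ ≤ ω l ^ (t * (|k l| : ℝ)) * ((N + 1) * Q * (1 + |x|)) := by gcongr
    _ = (N + 1) * (ω l ^ (t * (|k l| : ℝ)) * Q) * (1 + |x|) := by ring
    _ = (N + 1) * (∏ j ∈ k.support, ω j ^ (t * (|k j| : ℝ))) * (1 + |x|) := by
        rw [← mul_prod_erase k.support (fun j => ω j ^ (t * (|k j| : ℝ))) hl]

theorem sum_abs_mul_rpow_le_of_one_le (hω : ∀ l ∈ k.support, 1 ≤ ω l) (ht : 1 ≤ t) :
    ∑ l ∈ k.support, (|k l| : ℝ) * ω l ^ (t + 1)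
      ≤ (∑ l ∈ k.support, (|k l| : ℝ)) * ((∑ l ∈ k.support, (|k l| : ℝ)) + 1)
        * (∏ l ∈ k.support, ω l ^ (t * (|k l| : ℝ)))
        * (1 + |∑ l ∈ k.support, (k l : ℝ) * ω l|) := by
  calc ∑ l ∈ k.support, (|k l| : ℝ) * ω l ^ (t + 1)
      ≤ ∑ l ∈ k.support, (|k l| : ℝ) * (((∑ j ∈ k.support, (|k j| : ℝ)) + 1)
          * (∏ j ∈ k.support, ω j ^ (t * (|k j| : ℝ)))
          * (1 + |∑ j ∈ k.support, (k j : ℝ) * ω j|)) := by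
        gcongr with l hl
        exact rpow_add_one_le_of_one_le hω ht hl
    _ = _ := by rw [← sum_mul]; ring

theorem sum_abs_mul_rpow_le_of_le {m : ℝ} (hm : 0 < m) (hm1 : m ≤ 1)
    (hω : ∀ l ∈ k.support, m ≤ ω l) (ht : 1 ≤ t) :
    ∑ l ∈ k.support, (|k l| : ℝ) * ω l ^ (t + 1)
      ≤ m ^ (-(t * ∑ l ∈ k.support, (|k l| : ℝ)))
        * (∑ l ∈ k.support, (|k l| : ℝ)) * ((∑ l ∈ k.support, (|k l| : ℝ)) + 1)
        * (∏ l ∈ k.support, ω l ^ (t * (|k l| : ℝ)))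
        * (1 + |∑ l ∈ k.support, (k l : ℝ) * ω l|) := by
  set N := ∑ l ∈ k.support, (|k l| : ℝ)
  set ω' : α → ℝ := fun l => ω l / m
  have hω_eq : ∀ l, ω l = m * ω' l := fun l => by simp only [ω']; field_simp
  have hω' : ∀ l ∈ k.support, 1 ≤ ω' l := fun l hl => (one_le_div hm).2 (hω l hl)
  have hω'_nonneg : ∀ l ∈ k.support, 0 ≤ ω' l := fun l hl => zero_le_one.trans (hω' l hl)
  have h_sum : ∑ l ∈ k.support, (|k l| : ℝ) * ω l ^ (t + 1)
      = m ^ (t + 1) * ∑ l ∈ k.support, (|k l| : ℝ) * ω' l ^ (t + 1) := by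
    rw [mul_sum]
    refine sum_congr rfl fun l hl => ?_
    rw [hω_eq, Real.mul_rpow hm.le (hω'_nonneg l hl)]
    ring
  have h_prod : ∏ l ∈ k.support, ω l ^ (t * (|k l| : ℝ))
      = m ^ (t * N) * ∏ l ∈ k.support, ω' l ^ (t * (|k l| : ℝ)) := by
    rw [mul_sum, Real.rpow_sum_of_pos hm, ← prod_mul_distrib]
    refine prod_congr rfl fun l hl => ?_
    rw [hω_eq, Real.mul_rpow hm.le (hω'_nonneg l hl)]
  have h_pairing : ∑ l ∈ k.support, (k l : ℝ) * ω l = m * ∑ l ∈ k.support, (k l : ℝ) * ω' l := by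
    rw [mul_sum]
    refine sum_congr rfl fun l _ => ?_
    rw [hω_eq]
    ring
  have h_scale : m ^ (t + 1) ≤ m := by
    simpa using Real.rpow_le_rpow_of_exponent_ge hm hm1 (by linarith : 1 ≤ t + 1)
  have h_cancel : m ^ (-(t * N)) * m ^ (t * N) = 1 := by
    rw [Real.rpow_neg hm.le, inv_mul_cancel₀ (Real.rpow_pos_of_pos hm _).ne']
  set P' := ∏ l ∈ k.support, ω' l ^ (t * (|k l| : ℝ))
  set x' := ∑ l ∈ k.support, (k l : ℝ) * ω' l
  have hN : 0 ≤ N := sum_nonneg fun _ _ => abs_nonneg _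
  have hP' : 0 ≤ P' := prod_nonneg fun l hl => Real.rpow_nonneg (hω'_nonneg l hl) _
  have hL' : 0 ≤ ∑ l ∈ k.support, (|k l| : ℝ) * ω' l ^ (t + 1) :=
    sum_nonneg fun l hl => mul_nonneg (abs_nonneg _) (Real.rpow_nonneg (hω'_nonneg l hl) _)
  rw [h_sum, h_prod, h_pairing, abs_mul, abs_of_pos hm]
  calc m ^ (t + 1) * ∑ l ∈ k.support, (|k l| : ℝ) * ω' l ^ (t + 1)
      ≤ m * (N * (N + 1) * P' * (1 + |x'|)) := by
        gcongr
        exact sum_abs_mul_rpow_le_of_one_le hω' ht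
    _ = N * (N + 1) * P' * (m + m * |x'|) := by ring
    _ ≤ N * (N + 1) * P' * (1 + m * |x'|) := by gcongr
    _ = m ^ (-(t * N)) * m ^ (t * N) * N * (N + 1) * P' * (1 + m * |x'|) := by
        rw [h_cancel, one_mul]
    _ = _ := by ring

end

/-- For `K ≥ 1`, `s ≥ 1`, `ρ > 0` and `ω_l = √(ρ+l²)`, there is a constant `C`
such that for all finitely supported integer sequences `k` with `‖k‖ ≤ K`,
`Σ_l |k_l| ω_l^{2s+1} ≤ C ω^{2s|k|}(1 + |k·ω|)`. -/
theorem stmt15 (K : ℕ) (hK : 1 ≤ K) (s ρ : ℝ) (hs : 1 ≤ s) (hρ : 0 < ρ) :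
    ∃ C : ℝ, 0 < C ∧ ∀ k : ℕ →₀ ℤ, knorm k ≤ (K : ℤ) →
      (∑ l ∈ k.support, (|k l| : ℝ) * Real.sqrt (ρ + (l : ℝ)^2) ^ (2 * s + 1))
        ≤ C * (∏ l ∈ k.support, Real.sqrt (ρ + (l : ℝ)^2) ^ (2 * s * (|k l| : ℝ))) *
            (1 + |∑ l ∈ k.support, (k l : ℝ) * Real.sqrt (ρ + (l : ℝ)^2)|) := by
  set m := min 1 (Real.sqrt ρ)
  have hm : 0 < m := lt_min one_pos (Real.sqrt_pos.2 hρ)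
  have hm_le_ω : ∀ l : ℕ, m ≤ Real.sqrt (ρ + (l : ℝ)^2) := fun l =>
    (min_le_right _ _).trans (Real.sqrt_le_sqrt (le_add_of_nonneg_right (sq_nonneg _)))
  have hK0 : (0 : ℝ) < K := by exact_mod_cast hK
  have hC : 0 < m ^ (-(2 * s * K)) * K * (K + 1) := by positivity
  refine ⟨m ^ (-(2 * s * K)) * K * (K + 1), hC, fun k hk => ?_⟩
  set N := ∑ l ∈ k.support, (|k l| : ℝ)
  have hN : N ≤ K := by
    have hk' : ∑ l ∈ k.support, |k l| ≤ (K : ℤ) := hk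
    simp only [N]
    exact_mod_cast hk'
  have hN0 : 0 ≤ N := sum_nonneg fun _ _ => abs_nonneg _
  have h_const : m ^ (-(2 * s * N)) * N * (N + 1) ≤ m ^ (-(2 * s * K)) * K * (K + 1) := by
    have := Real.rpow_le_rpow_of_exponent_ge hm (min_le_left _ _)
      (by nlinarith : -(2 * s * K) ≤ -(2 * s * N))
    gcongr
  refine (sum_abs_mul_rpow_le_of_le hm (min_le_left _ _) (fun l _ => hm_le_ω l)
    (by linarith)).trans ?_
  gcongr
end
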